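/- arXiv:1910.13932 — 9 statements merged into one kernel-verified Lean document; each statement's English description precedes it below -/
import Mathlib

section
/- For every real a > 0 and every real x with 0 < x ≤ π/2, one has (1 − e^{−2·a·x}) − 2·a·(sin x)·e^{−a·x} > 0. -/
/-! With `t = a x`, `1 − e^{−2t} = 2 e^{−t} sinh t > 2 t e^{−t} > 2 a (sin x) e^{−t}`,
since `sinh t > t` and `sin x < x` for positive arguments. -/

open Real

theorem Real.one_sub_exp_neg_two_mul (t : ℝ) : 1 - exp (-2 * t) = 2 * sinh t * exp (-t) := by
  have h : exp t * exp (-t) = 1 := by rw [← exp_add, add_neg_cancel, exp_zero]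
  rw [sinh_eq, show -2 * t = -t + -t by ring, exp_add]
  linear_combination -h

theorem stmt_1_general (a x : ℝ) (ha : 0 < a) (hx : 0 < x) :
    0 < (1 - Real.exp (-2 * a * x)) - 2 * a * Real.sin x * Real.exp (-a * x) := by
  have hax : 0 < a * x := mul_pos ha hx
  rw [sub_pos]
  calc 2 * a * sin x * exp (-a * x) < 2 * (a * x) * exp (-(a * x)) := by
        rw [neg_mul, mul_assoc 2]
        gcongr
        exact sin_lt hx
    _ < 2 * sinh (a * x) * exp (-(a * x)) := by gcongr; exact self_lt_sinh_iff.mpr hax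
    _ = 1 - exp (-2 * a * x) := by rw [mul_assoc (-2), one_sub_exp_neg_two_mul]

/-- For every real `a > 0` and every real `x` with `0 < x ≤ π/2`,
`(1 − e^{−2ax}) − 2a (sin x) e^{−ax} > 0`. -/
theorem stmt_1 (a x : ℝ) (ha : 0 < a) (hx : 0 < x) (hx' : x ≤ Real.pi / 2) :
    0 < (1 - Real.exp (-2 * a * x)) - 2 * a * Real.sin x * Real.exp (-a * x) :=
  stmt_1_general a x ha hx
end

section
/- Let 0 < k1 < k2 and let a, b > 0 be real. Then for every ξ ∈ ℂ with Re ξ · Im ξ ≤ 0 and for each j ∈ {1,2}: |μ₁(ξ) + μ₂(ξ)| · |exp(i·μ_j(ξ)·(a + i·b)) − 1| ≤ (4 + 2·√(k2² − k1²)·|a + i·b|) · |μ_j(ξ)|. -/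
/-- `w` is the principal square root of `z`: `w² = z` and either `Re w > 0`, or
`Re w = 0` and `Im w ≥ 0`. -/
def IsPrincipalSqrt (z w : ℂ) : Prop :=
  w ^ 2 = z ∧ (0 < w.re ∨ (w.re = 0 ∧ 0 ≤ w.im))

/-!
Both `μ₁(ξ)` and `μ₂(ξ)` lie in the closed first quadrant, since `Re ξ · Im ξ ≤ 0` makes
`Im (k² − ξ²) ≥ 0`. Hence `‖μ₂ − μ₁‖ ≤ ‖μ₂ + μ₁‖`, and since `(μ₂ − μ₁)(μ₂ + μ₁) = k2² − k1²`
this gives `‖μ₂ − μ₁‖ ≤ √(k2² − k1²)`. Writing `μ₁ + μ₂ = 2μ ± (μ₂ − μ₁)`, it remains to bound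
`‖exp w − 1‖` for `w = i μ (a + i b)`, which has `Re w ≤ 0`: by `2` against the `2μ` part and
by `2‖w‖` against the `μ₂ − μ₁` part.
-/

open Complex

lemma IsPrincipalSqrt.re_nonneg_and_im_nonneg {z w : ℂ} (h : IsPrincipalSqrt z w)
    (hz : 0 ≤ z.im) : 0 ≤ w.re ∧ 0 ≤ w.im := by
  obtain ⟨hsq, hre | ⟨hre, him⟩⟩ := h
  · have hzim : z.im = 2 * w.re * w.im := by
      rw [← hsq, pow_two, mul_im]; ring
    exact ⟨hre.le, by nlinarith⟩
  · exact ⟨hre.ge, him⟩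

lemma im_ofReal_sq_sub_sq_nonneg (k : ℝ) {ξ : ℂ} (hξ : ξ.re * ξ.im ≤ 0) :
    0 ≤ ((k : ℂ) ^ 2 - ξ ^ 2).im := by
  simp only [pow_two, sub_im, mul_im, ofReal_re, ofReal_im]
  linarith

lemma norm_sub_le_norm_add_of_re_im_nonneg {p q : ℂ} (hp : 0 ≤ p.re ∧ 0 ≤ p.im)
    (hq : 0 ≤ q.re ∧ 0 ≤ q.im) : ‖q - p‖ ≤ ‖q + p‖ := by
  rw [← sq_le_sq₀ (norm_nonneg _) (norm_nonneg _), Complex.sq_norm, Complex.sq_norm,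
    normSq_apply, normSq_apply]
  simp only [sub_re, sub_im, add_re, add_im]
  nlinarith [mul_nonneg hp.1 hq.1, mul_nonneg hp.2 hq.2]

lemma norm_le_sqrt_norm_mul_of_norm_le {x y : ℂ} (h : ‖x‖ ≤ ‖y‖) :
    ‖x‖ ≤ Real.sqrt ‖x * y‖ := by
  rw [norm_mul]
  exact Real.le_sqrt_of_sq_le (by nlinarith [norm_nonneg x])

lemma norm_add_le_two_mul_norm_add_norm_sub (p q : ℂ) : ‖p + q‖ ≤ 2 * ‖p‖ + ‖q - p‖ :=
  calc ‖p + q‖ = ‖2 * p + (q - p)‖ := by ring_nf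
    _ ≤ ‖2 * p‖ + ‖q - p‖ := norm_add_le _ _
    _ = 2 * ‖p‖ + ‖q - p‖ := by simp

lemma norm_exp_sub_one_le_two_of_re_nonpos {w : ℂ} (hw : w.re ≤ 0) : ‖exp w - 1‖ ≤ 2 :=
  calc ‖exp w - 1‖ ≤ ‖exp w‖ + ‖(1 : ℂ)‖ := norm_sub_le _ _
    _ ≤ 2 := by rw [norm_exp, norm_one]; linarith [Real.exp_le_one_iff.mpr hw]

lemma norm_exp_sub_one_le_two_mul_norm_of_re_nonpos {w : ℂ} (hw : w.re ≤ 0) :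
    ‖exp w - 1‖ ≤ 2 * ‖w‖ := by
  rcases le_or_gt ‖w‖ 1 with h | h
  · exact norm_exp_sub_one_le h
  · linarith [norm_exp_sub_one_le_two_of_re_nonpos hw]

lemma re_I_mul_mul_nonpos {μ z : ℂ} (hμ : 0 ≤ μ.re ∧ 0 ≤ μ.im) (hz : 0 ≤ z.re ∧ 0 ≤ z.im) :
    (I * μ * z).re ≤ 0 := by
  simp only [mul_re, mul_im, I_re, I_im]
  nlinarith [mul_nonneg hμ.1 hz.2, mul_nonneg hμ.2 hz.1]

lemma mul_norm_exp_I_mul_mul_sub_one_le {μ z : ℂ} (hμ : 0 ≤ μ.re ∧ 0 ≤ μ.im)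
    (hz : 0 ≤ z.re ∧ 0 ≤ z.im) {S d s : ℝ} (hS : S ≤ 2 * ‖μ‖ + d) (hd : d ≤ s)
    (hd₀ : 0 ≤ d) : S * ‖exp (I * μ * z) - 1‖ ≤ (4 + 2 * s * ‖z‖) * ‖μ‖ := by
  have hw := re_I_mul_mul_nonpos hμ hz
  have hE₂ := norm_exp_sub_one_le_two_of_re_nonpos hw
  have hEw : ‖exp (I * μ * z) - 1‖ ≤ 2 * (‖μ‖ * ‖z‖) := by
    simpa using norm_exp_sub_one_le_two_mul_norm_of_re_nonpos hw
  calc S * ‖exp (I * μ * z) - 1‖ ≤ (2 * ‖μ‖ + d) * ‖exp (I * μ * z) - 1‖ :=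
        mul_le_mul_of_nonneg_right hS (norm_nonneg _)
    _ = 2 * ‖μ‖ * ‖exp (I * μ * z) - 1‖ + d * ‖exp (I * μ * z) - 1‖ := by ring
    _ ≤ 2 * ‖μ‖ * 2 + s * (2 * (‖μ‖ * ‖z‖)) :=
        add_le_add (mul_le_mul_of_nonneg_left hE₂ (by positivity))
          (mul_le_mul hd hEw (norm_nonneg _) (hd₀.trans hd))
    _ = (4 + 2 * s * ‖z‖) * ‖μ‖ := by ring

/-- Let `0 < k1 < k2` and `a, b > 0`. For every `ξ ∈ ℂ` with
`Re ξ · Im ξ ≤ 0` and each `j ∈ {1,2}`,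
`|μ₁(ξ) + μ₂(ξ)| · |exp(i μ_j(ξ) (a + i b)) − 1| ≤ (4 + 2 √(k2² − k1²) |a + i b|) · |μ_j(ξ)|`. -/
theorem stmt_3 (k1 k2 a b : ℝ) (hk1 : 0 < k1) (hk12 : k1 < k2) (ha : 0 < a) (hb : 0 < b)
    (μ₁ μ₂ : ℂ → ℂ)
    (hμ₁ : ∀ ξ : ℂ, IsPrincipalSqrt ((k1 : ℂ) ^ 2 - ξ ^ 2) (μ₁ ξ))
    (hμ₂ : ∀ ξ : ℂ, IsPrincipalSqrt ((k2 : ℂ) ^ 2 - ξ ^ 2) (μ₂ ξ))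
    (ξ : ℂ) (hξ : ξ.re * ξ.im ≤ 0) :
    ∀ μ ∈ ({μ₁ ξ, μ₂ ξ} : Set ℂ),
      ‖μ₁ ξ + μ₂ ξ‖ *
          ‖Complex.exp (Complex.I * μ * ((a : ℂ) + Complex.I * (b : ℂ))) - 1‖ ≤
        (4 + 2 * Real.sqrt (k2 ^ 2 - k1 ^ 2) * ‖(a : ℂ) + Complex.I * (b : ℂ)‖) *
          ‖μ‖ := by
  have h₁ := (hμ₁ ξ).re_nonneg_and_im_nonneg (im_ofReal_sq_sub_sq_nonneg k1 hξ)
  have h₂ := (hμ₂ ξ).re_nonneg_and_im_nonneg (im_ofReal_sq_sub_sq_nonneg k2 hξ)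
  have hprod : (μ₂ ξ - μ₁ ξ) * (μ₂ ξ + μ₁ ξ) = ((k2 ^ 2 - k1 ^ 2 : ℝ) : ℂ) := by
    rw [mul_comm, ← sq_sub_sq, (hμ₁ ξ).1, (hμ₂ ξ).1]; push_cast; ring
  have hdiff : ‖μ₂ ξ - μ₁ ξ‖ ≤ Real.sqrt (k2 ^ 2 - k1 ^ 2) := by
    have h := norm_le_sqrt_norm_mul_of_norm_le (norm_sub_le_norm_add_of_re_im_nonneg h₁ h₂)
    rwa [hprod, norm_real, Real.norm_of_nonneg (by nlinarith)] at h
  have hz : 0 ≤ ((a : ℂ) + I * b).re ∧ 0 ≤ ((a : ℂ) + I * b).im := by simp [ha.le, hb.le]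
  rintro μ (rfl | rfl)
  · exact mul_norm_exp_I_mul_mul_sub_one_le h₁ hz
      (norm_add_le_two_mul_norm_add_norm_sub _ _) hdiff (norm_nonneg _)
  · refine mul_norm_exp_I_mul_mul_sub_one_le h₂ hz ?_ hdiff (norm_nonneg _)
    rw [add_comm, ← norm_neg (μ₂ ξ - μ₁ ξ), neg_sub]
    exact norm_add_le_two_mul_norm_add_norm_sub _ _
end

section
/- Let 0 < k1 < k2. Then for every ξ ∈ ℂ one has √(k2² − k1²) ≤ |μ₁(ξ) + μ₂(ξ)| (in particular μ₁(ξ) + μ₂(ξ) ≠ 0) and |μ₁(ξ) − μ₂(ξ)| ≤ √(k2² − k1²). -/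
open ComplexConjugate

theorem IsPrincipalSqrt.re_mul_conj_nonneg {z w a b : ℂ} (ha : IsPrincipalSqrt z a)
    (hb : IsPrincipalSqrt w b) (him : z.im = w.im) : 0 ≤ (a * conj b).re := by
  obtain ⟨rfl, ha⟩ := ha
  obtain ⟨rfl, hb⟩ := hb
  have hprod : a.re * a.im = b.re * b.im := by
    simp only [sq, Complex.mul_im] at him
    linarith
  rw [Complex.mul_re, Complex.conj_re, Complex.conj_im, mul_neg, sub_neg_eq_add]
  rcases ha with ha | ⟨ha, ha'⟩ <;> rcases hb with hb | ⟨hb, hb'⟩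
  · -- `(a.re * b.re) * (a.im * b.im) = (a.re * a.im) ^ 2`, so `a.im * b.im` cannot be negative.
    have hsq : (a.re * b.re) * (a.im * b.im) = (a.re * a.im) ^ 2 := by
      rw [sq]; nth_rw 2 [hprod]; ring
    nlinarith [mul_pos ha hb, sq_nonneg (a.re * a.im)]
  · rw [hb, zero_mul, mul_eq_zero] at hprod
    simp [hb, hprod.resolve_left ha.ne']
  · rw [ha, zero_mul, eq_comm, mul_eq_zero] at hprod
    simp [ha, hprod.resolve_left hb.ne']
  · simpa [ha] using mul_nonneg ha' hb'

theorem Complex.norm_sub_le_norm_add_of_re_mul_conj_nonneg {a b : ℂ}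
    (h : 0 ≤ (a * conj b).re) : ‖a - b‖ ≤ ‖a + b‖ := by
  rw [← sq_le_sq₀ (norm_nonneg _) (norm_nonneg _), ← Complex.normSq_eq_norm_sq,
    ← Complex.normSq_eq_norm_sq, Complex.normSq_sub, Complex.normSq_add]
  linarith

theorem Real.le_sqrt_mul_and_sqrt_mul_le {x y : ℝ} (hx : 0 ≤ x) (hxy : x ≤ y) :
    x ≤ √(x * y) ∧ √(x * y) ≤ y := by
  have hy : 0 ≤ y := hx.trans hxy
  constructor
  · calc x = √(x * x) := (Real.sqrt_mul_self hx).symm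
      _ ≤ √(x * y) := Real.sqrt_le_sqrt (mul_le_mul_of_nonneg_left hxy hx)
  · calc √(x * y) ≤ √(y * y) := Real.sqrt_le_sqrt (mul_le_mul_of_nonneg_right hxy hy)
      _ = y := Real.sqrt_mul_self hy

/-- Let `0 < k1 < k2`. For every `ξ ∈ ℂ`,
`√(k2² − k1²) ≤ |μ₁(ξ) + μ₂(ξ)|` (in particular `μ₁(ξ) + μ₂(ξ) ≠ 0`) and
`|μ₁(ξ) − μ₂(ξ)| ≤ √(k2² − k1²)`. -/
theorem stmt_4 (k1 k2 : ℝ) (hk1 : 0 < k1) (hk12 : k1 < k2)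
    (μ₁ μ₂ : ℂ → ℂ)
    (hμ₁ : ∀ ξ : ℂ, IsPrincipalSqrt ((k1 : ℂ) ^ 2 - ξ ^ 2) (μ₁ ξ))
    (hμ₂ : ∀ ξ : ℂ, IsPrincipalSqrt ((k2 : ℂ) ^ 2 - ξ ^ 2) (μ₂ ξ))
    (ξ : ℂ) :
    Real.sqrt (k2 ^ 2 - k1 ^ 2) ≤ ‖μ₁ ξ + μ₂ ξ‖ ∧
    μ₁ ξ + μ₂ ξ ≠ 0 ∧
    ‖μ₁ ξ - μ₂ ξ‖ ≤ Real.sqrt (k2 ^ 2 - k1 ^ 2) := by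
  have hc : 0 < k2 ^ 2 - k1 ^ 2 := by nlinarith
  have hre := (hμ₁ ξ).re_mul_conj_nonneg (hμ₂ ξ) (by simp [sq])
  have hprod : ‖μ₁ ξ - μ₂ ξ‖ * ‖μ₁ ξ + μ₂ ξ‖ = k2 ^ 2 - k1 ^ 2 := by
    have hdiff : (μ₁ ξ - μ₂ ξ) * (μ₁ ξ + μ₂ ξ) = -((k2 ^ 2 - k1 ^ 2 : ℝ) : ℂ) := by
      rw [mul_comm, ← sq_sub_sq, (hμ₁ ξ).1, (hμ₂ ξ).1]
      push_cast
      ring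
    rw [← norm_mul, hdiff, norm_neg, Complex.norm_real, Real.norm_of_nonneg hc.le]
  obtain ⟨hlow, hup⟩ := Real.le_sqrt_mul_and_sqrt_mul_le (norm_nonneg _)
    (Complex.norm_sub_le_norm_add_of_re_mul_conj_nonneg hre)
  rw [hprod] at hlow hup
  exact ⟨hup, norm_pos_iff.mp ((Real.sqrt_pos.mpr hc).trans_le hup), hlow⟩
end

section
/- Let 0 < k1 < k2, M2 > 0 and σ̄2 > 0. Then: (i) for every real ξ, A(ξ) = 0 if and only if ξ ∈ {k1, −k1, k2, −k2}; (ii) for every purely imaginary ξ (i.e. ξ = i·t with t ∈ ℝ), A(ξ) ≠ 0. -/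
open Complex ComplexConjugate

lemma Complex.one_add_exp_two_mul_I (w : ℂ) :
    1 + exp (2 * I * w) = 2 * cos w * exp (I * w) := by
  rw [two_cos, show 2 * I * w = w * I + w * I by ring, exp_add, neg_mul w, exp_neg, mul_comm I w]
  field_simp
  ring

lemma Complex.one_sub_exp_two_mul_I (w : ℂ) :
    1 - exp (2 * I * w) = -2 * I * sin w * exp (I * w) := by
  rw [show -2 * I * sin w = -I * (2 * sin w) by ring, two_sin,
    show 2 * I * w = w * I + w * I by ring, exp_add, neg_mul w, exp_neg, mul_comm I w]
  field_simp
  linear_combination (1 - exp (w * I) ^ 2) * I_sq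

lemma Complex.cos_mul_conj_sin (w : ℂ) :
    cos w * conj (sin w) = ((Real.sin (2 * w.re) : ℂ) - Real.sinh (2 * w.im) * I) / 2 := by
  rw [cos_eq w, sin_eq w]
  simp only [map_add, map_mul, ← ofReal_sin, ← ofReal_cos, ← ofReal_sinh, ← ofReal_cosh,
    conj_ofReal, conj_I]
  push_cast
  rw [sin_two_mul, sinh_two_mul]
  linear_combination
    cos (w.re : ℂ) * sin (w.re : ℂ) * (sinh (w.im : ℂ) ^ 2 * I_sq + cosh_sq_sub_sinh_sq (w.im : ℂ))
      - cosh (w.im : ℂ) * sinh (w.im : ℂ) * I * sin_sq_add_cos_sq (w.re : ℂ)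

lemma Complex.im_conj_mul_cos_mul_conj_sin (w : ℂ) :
    (conj w * cos w * conj (sin w)).im
      = -(w.re * Real.sinh (2 * w.im) + w.im * Real.sin (2 * w.re)) / 2 := by
  rw [mul_assoc, cos_mul_conj_sin]
  generalize Real.sin (2 * w.re) = s
  generalize Real.sinh (2 * w.im) = t
  simp only [mul_im, mul_re, conj_re, conj_im, sub_re, sub_im, ofReal_re, ofReal_im, I_re, I_im,
    div_ofNat_re, div_ofNat_im]
  ring

lemma Real.mul_sinh_two_mul_add_mul_sin_two_mul_pos {a b : ℝ} (ha : 0 < a) (hb : 0 < b) :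
    0 < a * sinh (2 * b) + b * sin (2 * a) := by
  have hsinh : 2 * b < sinh (2 * b) := self_lt_sinh_iff.2 (by positivity)
  have hsin : -(2 * a) ≤ sin (2 * a) := by
    simpa [abs_of_pos ha] using (abs_le.1 (abs_sin_le_abs (x := 2 * a))).1
  nlinarith

lemma Complex.im_conj_mul_mul_cos_mul_conj_sin_neg {z μ : ℂ} (hz_re : 0 < z.re) (hz_im : 0 < z.im)
    {r : ℝ} (hr : 0 < r) (hμ : μ = r ∨ μ = r * I) :
    (conj z * μ * cos (μ * z) * conj (sin (μ * z))).im < 0 := by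
  rcases hμ with rfl | rfl
  · have h : conj z * r = conj (r * z) := by simp [mul_comm]
    rw [h, im_conj_mul_cos_mul_conj_sin]
    have := Real.mul_sinh_two_mul_add_mul_sin_two_mul_pos (a := (r * z).re) (b := (r * z).im)
      (by rw [re_ofReal_mul]; positivity) (by rw [im_ofReal_mul]; positivity)
    linarith
  · have h : conj z * (r * I) = -conj (r * I * z) := by
      simp only [map_mul, conj_ofReal, conj_I]; ring
    rw [h, neg_mul, neg_mul, neg_im, im_conj_mul_cos_mul_conj_sin]
    have := Real.mul_sinh_two_mul_add_mul_sin_two_mul_pos (a := r * z.im) (b := r * z.re)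
      (by positivity) (by positivity)
    have hw_re : (r * I * z).re = -(r * z.im) := by simp
    have hw_im : (r * I * z).im = r * z.re := by simp
    rw [hw_re, hw_im, mul_neg, Real.sin_neg]
    linarith

/-- `a₁ / s₁` and `a₂ / s₂` lie in the open lower half-plane, hence so does their sum
`(a₁ * s₂ + a₂ * s₁) / (s₁ * s₂)`. -/
lemma Complex.mul_add_mul_ne_zero_of_im_mul_conj_neg {a₁ a₂ s₁ s₂ : ℂ}
    (h₁ : (a₁ * conj s₁).im < 0) (h₂ : (a₂ * conj s₂).im < 0) : a₁ * s₂ + a₂ * s₁ ≠ 0 := by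
  have hs₁ : s₁ ≠ 0 := by rintro rfl; simp at h₁
  have hs₂ : s₂ ≠ 0 := by rintro rfl; simp at h₂
  intro h
  have key : (a₁ * s₂ + a₂ * s₁) * conj s₁ * conj s₂
      = a₁ * conj s₁ * normSq s₂ + a₂ * conj s₂ * normSq s₁ := by
    rw [normSq_eq_conj_mul_self, normSq_eq_conj_mul_self]; ring
  have him := congrArg im key
  rw [h] at him
  simp only [zero_mul, zero_im, add_im, im_mul_ofReal] at him
  nlinarith [normSq_pos.2 hs₁, normSq_pos.2 hs₂]

lemma IsPrincipalSqrt.exists_pos_eq_or_eq_mul_I {c : ℝ} {μ : ℂ} (h : IsPrincipalSqrt c μ)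
    (hc : c ≠ 0) : ∃ r : ℝ, 0 < r ∧ (μ = r ∨ μ = r * I) := by
  obtain ⟨hsq, hre | ⟨hre, him⟩⟩ := h
  all_goals
    have hsq_re := congrArg re hsq
    have hsq_im := congrArg im hsq
    simp only [sq, mul_re, mul_im, ofReal_re, ofReal_im] at hsq_re hsq_im
  · have him : μ.im = 0 := by
      rcases mul_eq_zero.1 (show μ.re * μ.im = 0 by linarith) with h | h
      · linarith
      · exact h
    exact ⟨μ.re, hre, Or.inl (ext (by simp) (by simp [him]))⟩
  · have him_ne : μ.im ≠ 0 := by rintro h; apply hc; rw [← hsq_re, hre, h]; ring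
    exact ⟨μ.im, lt_of_le_of_ne him (Ne.symm him_ne), Or.inr (ext (by simp [hre]) (by simp))⟩

lemma IsPrincipalSqrt.eq_zero_of_eq_or_eq_neg {k ξ : ℝ} {μ : ℂ}
    (h : IsPrincipalSqrt ((k : ℂ) ^ 2 - (ξ : ℂ) ^ 2) μ) (hξ : ξ = k ∨ ξ = -k) : μ = 0 := by
  rcases hξ with rfl | rfl <;> simpa using h.1

noncomputable def dispersionFunction (μ₁ μ₂ z : ℂ) : ℂ :=
  (1 - exp (2 * I * μ₁ * z) * exp (2 * I * μ₂ * z)) * (μ₁ + μ₂)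
    + (exp (2 * I * μ₁ * z) - exp (2 * I * μ₂ * z)) * (μ₁ - μ₂)

lemma dispersionFunction_zero_left (μ₂ z : ℂ) : dispersionFunction 0 μ₂ z = 0 := by
  simp [dispersionFunction]

lemma dispersionFunction_zero_right (μ₁ z : ℂ) : dispersionFunction μ₁ 0 z = 0 := by
  simp only [dispersionFunction, mul_zero, zero_mul, exp_zero, mul_one]
  ring

lemma dispersionFunction_eq (μ₁ μ₂ z : ℂ) :
    dispersionFunction μ₁ μ₂ z = -4 * I * (exp (I * (μ₁ * z)) * exp (I * (μ₂ * z)))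
      * (μ₁ * cos (μ₁ * z) * sin (μ₂ * z) + μ₂ * sin (μ₁ * z) * cos (μ₂ * z)) := by
  have regroup : ∀ ε₁ ε₂ : ℂ, (1 - ε₁ * ε₂) * (μ₁ + μ₂) + (ε₁ - ε₂) * (μ₁ - μ₂)
      = μ₁ * (1 + ε₁) * (1 - ε₂) + μ₂ * (1 - ε₁) * (1 + ε₂) := fun _ _ => by ring
  rw [dispersionFunction, regroup, mul_assoc (2 * I), mul_assoc (2 * I), one_add_exp_two_mul_I,
    one_sub_exp_two_mul_I, one_add_exp_two_mul_I, one_sub_exp_two_mul_I]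
  ring

lemma dispersionFunction_ne_zero {z : ℂ} (hz_re : 0 < z.re) (hz_im : 0 < z.im) {μ₁ μ₂ : ℂ}
    (hμ₁ : ∃ r : ℝ, 0 < r ∧ (μ₁ = r ∨ μ₁ = r * I))
    (hμ₂ : ∃ r : ℝ, 0 < r ∧ (μ₂ = r ∨ μ₂ = r * I)) : dispersionFunction μ₁ μ₂ z ≠ 0 := by
  obtain ⟨r₁, hr₁, hμ₁⟩ := hμ₁
  obtain ⟨r₂, hr₂, hμ₂⟩ := hμ₂
  have hsum :
      conj z * (μ₁ * cos (μ₁ * z) * sin (μ₂ * z) + μ₂ * sin (μ₁ * z) * cos (μ₂ * z)) ≠ 0 := by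
    have := mul_add_mul_ne_zero_of_im_mul_conj_neg
      (im_conj_mul_mul_cos_mul_conj_sin_neg hz_re hz_im hr₁ hμ₁)
      (im_conj_mul_mul_cos_mul_conj_sin_neg hz_re hz_im hr₂ hμ₂)
    convert this using 1; ring
  rw [dispersionFunction_eq]
  refine mul_ne_zero (mul_ne_zero (by simp) (mul_ne_zero (exp_ne_zero _) (exp_ne_zero _))) ?_
  exact right_ne_zero_of_mul hsum

/-- Let `0 < k1 < k2`, `M2 > 0`, `σ̄2 > 0`. Then (i) for real `ξ`,
`A(ξ) = 0` iff `ξ ∈ {k1, −k1, k2, −k2}`; (ii) `A(ξ) ≠ 0` for purely imaginary `ξ`. -/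
theorem stmt_5 (k1 k2 M2 σ2 : ℝ) (hk1 : 0 < k1) (hk12 : k1 < k2) (hM2 : 0 < M2) (hσ2 : 0 < σ2)
    (μ₁ μ₂ ε₁ ε₂ A : ℂ → ℂ)
    (hμ₁ : ∀ ξ : ℂ, IsPrincipalSqrt ((k1 : ℂ) ^ 2 - ξ ^ 2) (μ₁ ξ))
    (hμ₂ : ∀ ξ : ℂ, IsPrincipalSqrt ((k2 : ℂ) ^ 2 - ξ ^ 2) (μ₂ ξ))
    (hε₁ : ∀ ξ : ℂ, ε₁ ξ = Complex.exp (2 * Complex.I * μ₁ ξ * ((M2 : ℂ) + Complex.I * (σ2 : ℂ))))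
    (hε₂ : ∀ ξ : ℂ, ε₂ ξ = Complex.exp (2 * Complex.I * μ₂ ξ * ((M2 : ℂ) + Complex.I * (σ2 : ℂ))))
    (hA : ∀ ξ : ℂ, A ξ =
      (1 - ε₁ ξ * ε₂ ξ) * (μ₁ ξ + μ₂ ξ) + (ε₁ ξ - ε₂ ξ) * (μ₁ ξ - μ₂ ξ)) :
    (∀ ξ : ℝ, A (ξ : ℂ) = 0 ↔ (ξ = k1 ∨ ξ = -k1 ∨ ξ = k2 ∨ ξ = -k2)) ∧
    (∀ t : ℝ, A (Complex.I * (t : ℂ)) ≠ 0) := by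
  set z : ℂ := (M2 : ℂ) + I * (σ2 : ℂ)
  have hz_re : 0 < z.re := by simpa [z] using hM2
  have hz_im : 0 < z.im := by simpa [z] using hσ2
  have hA_eq : ∀ ξ, A ξ = dispersionFunction (μ₁ ξ) (μ₂ ξ) z := fun ξ => by
    rw [hA, hε₁, hε₂]; rfl
  have hA_ne : ∀ ξ : ℂ, ∀ c₁ c₂ : ℝ, c₁ ≠ 0 → c₂ ≠ 0 → (k1 : ℂ) ^ 2 - ξ ^ 2 = c₁ →
      (k2 : ℂ) ^ 2 - ξ ^ 2 = c₂ → A ξ ≠ 0 := by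
    intro ξ c₁ c₂ hc₁ hc₂ h₁ h₂
    rw [hA_eq]
    exact dispersionFunction_ne_zero hz_re hz_im
      ((h₁ ▸ hμ₁ ξ).exists_pos_eq_or_eq_mul_I hc₁) ((h₂ ▸ hμ₂ ξ).exists_pos_eq_or_eq_mul_I hc₂)
  refine ⟨fun ξ => ⟨fun h0 => ?_, fun hξ => ?_⟩, fun t => ?_⟩
  · by_contra hξ
    refine hA_ne ξ (k1 ^ 2 - ξ ^ 2) (k2 ^ 2 - ξ ^ 2) ?_ ?_ (by push_cast; rfl) (by push_cast; rfl)
      h0 <;> rw [Ne, sub_eq_zero, eq_comm, sq_eq_sq_iff_eq_or_eq_neg] <;> tauto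
  · rw [hA_eq]
    rcases or_assoc.2 hξ with h | h
    · rw [(hμ₁ ξ).eq_zero_of_eq_or_eq_neg h, dispersionFunction_zero_left]
    · rw [(hμ₂ ξ).eq_zero_of_eq_or_eq_neg h, dispersionFunction_zero_right]
  · exact hA_ne _ (k1 ^ 2 + t ^ 2) (k2 ^ 2 + t ^ 2) (by positivity) (by nlinarith)
      (by push_cast; linear_combination -(t : ℂ) ^ 2 * I_sq)
      (by push_cast; linear_combination -(t : ℂ) ^ 2 * I_sq)
end

section
/- Let 0 < k1 < k2, M2 > 0 and σ̄2 > 0. Then A(ξ) ≠ 0 for every ξ ∈ ℂ with Re ξ · Im ξ < 0 (i.e. for every ξ in the open second quadrant {Re ξ < 0, Im ξ > 0} or the open fourth quadrant {Re ξ > 0, Im ξ < 0}). -/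
/-!
Put `zⱼ = μⱼ M̃₂`. Up to the nonvanishing factor `-4i e^{iz₁} e^{iz₂} / M̃₂`, `A(ξ)` equals
`z₁ cos z₁ sin z₂ + z₂ sin z₁ cos z₂`; multiplying by `conj (sin z₁ sin z₂)` turns its vanishing
into `|sin z₂|² E(z₁) + |sin z₁|² E(z₂) = 0` with `E(z) = z cos z · conj (sin z)`.
Integrating `(f' f̄)'` over `[0, 1]` for `f(t) = sin (t z)` gives
`E(z) = |z|² ∫₀¹ |cos (t z)|² dt - z² ∫₀¹ |sin (t z)|² dt`.
Since `zⱼ² = (kⱼ² - ξ²) M̃₂²`, where `Im (kⱼ² - ξ²) = -2 Re ξ Im ξ > 0` and `Im M̃₂² = 2 M₂ σ̄₂ > 0`,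
the imaginary part of `conj (M̃₂²) E(zⱼ)` is strictly negative, so the weighted sum cannot vanish.
-/

open ComplexConjugate

namespace Real

noncomputable def sinhc (x : ℝ) : ℝ := if x = 0 then 1 else sinh x / x

lemma mul_sinhc (x : ℝ) : x * sinhc x = sinh x := by
  by_cases hx : x = 0
  · simp [sinhc, hx]
  · simp [sinhc, hx, mul_div_cancel₀]

lemma one_lt_sinhc {x : ℝ} (hx : x ≠ 0) : 1 < sinhc x := by
  rw [sinhc, if_neg hx]
  rcases hx.lt_or_gt with hneg | hpos
  · exact (one_lt_div_of_neg hneg).2 (sinh_lt_self_iff.2 hneg)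
  · exact (one_lt_div hpos).2 (self_lt_sinh_iff.2 hpos)

lemma one_le_sinhc (x : ℝ) : 1 ≤ sinhc x := by
  by_cases hx : x = 0
  · simp [sinhc, hx]
  · exact (one_lt_sinhc hx).le

lemma mul_sinc (x : ℝ) : x * sinc x = sin x := by
  by_cases hx : x = 0
  · simp [hx]
  · rw [sinc_of_ne_zero hx, mul_div_cancel₀ _ hx]

lemma sinc_lt_one {x : ℝ} (hx : x ≠ 0) : sinc x < 1 := by
  rw [sinc_of_ne_zero hx]
  calc sin x / x ≤ |sin x / x| := le_abs_self _
    _ = |sin x| / |x| := abs_div _ _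
    _ < 1 := (div_lt_one (abs_pos.2 hx)).2 (abs_sin_lt_abs hx)

end Real

namespace Complex

lemma im_sq (z : ℂ) : (z ^ 2).im = 2 * z.re * z.im := by
  rw [sq, mul_im]; ring

/-- `∫₀¹ |sin (t z)|² dt`. -/
noncomputable def meanNormSqSin (z : ℂ) : ℝ := (Real.sinhc (2 * z.im) - Real.sinc (2 * z.re)) / 2

/-- `∫₀¹ |cos (t z)|² dt`. -/
noncomputable def meanNormSqCos (z : ℂ) : ℝ := (Real.sinc (2 * z.re) + Real.sinhc (2 * z.im)) / 2

lemma meanNormSqSin_pos {z : ℂ} (hz : z ≠ 0) : 0 < meanNormSqSin z := by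
  unfold meanNormSqSin
  by_cases him : z.im = 0
  · have hre : 2 * z.re ≠ 0 := mul_ne_zero two_ne_zero fun hre => hz (Complex.ext hre him)
    linarith [Real.sinc_lt_one hre, Real.one_le_sinhc (2 * z.im)]
  · linarith [Real.sinc_le_one (2 * z.re), Real.one_lt_sinhc (mul_ne_zero two_ne_zero him)]

lemma meanNormSqCos_nonneg (z : ℂ) : 0 ≤ meanNormSqCos z := by
  unfold meanNormSqCos
  linarith [Real.neg_one_le_sinc (2 * z.re), Real.one_le_sinhc (2 * z.im)]

lemma cos_mul_conj_sin_s6 (z : ℂ) :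
    cos z * conj (sin z) = (Real.sin (2 * z.re) - Real.sinh (2 * z.im) * I) / 2 := by
  rw [← sin_conj, ofReal_sin, ofReal_sinh, ← add_conj, ← sin_mul_I, ← sub_conj, sin_add, sin_sub]
  ring

lemma mul_cos_mul_conj_sin (z : ℂ) :
    z * cos z * conj (sin z) = normSq z * meanNormSqCos z - z ^ 2 * meanNormSqSin z := by
  have hsin : (Real.sin (2 * z.re) : ℂ) = 2 * z.re * Real.sinc (2 * z.re) := by
    rw [← Real.mul_sinc]; push_cast; ring
  have hsinh : (Real.sinh (2 * z.im) : ℂ) = 2 * z.im * Real.sinhc (2 * z.im) := by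
    rw [← Real.mul_sinhc]; push_cast; ring
  rw [mul_assoc, cos_mul_conj_sin_s6, hsin, hsinh, meanNormSqCos, meanNormSqSin, normSq_apply]
  set x := z.re
  set y := z.im
  rw [show z = x + y * I from (re_add_im z).symm]
  push_cast
  linear_combination (-(y : ℂ) ^ 2 * (Real.sinc (2 * x) + Real.sinhc (2 * y)) / 2) * I_sq

lemma im_conj_mul_mul_cos_mul_conj_sin_neg_s6 {T z : ℂ} (hT : 0 ≤ T.im)
    (hz : 0 < (conj T * z ^ 2).im) : (conj T * (z * cos z * conj (sin z))).im < 0 := by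
  have hz0 : z ≠ 0 := by rintro rfl; simp at hz
  have hexpand : conj T * (z * cos z * conj (sin z)) =
      (normSq z * meanNormSqCos z : ℝ) * conj T - meanNormSqSin z * (conj T * z ^ 2) := by
    rw [mul_cos_mul_conj_sin]; push_cast; ring
  have hcos : 0 ≤ normSq z * meanNormSqCos z := mul_nonneg (normSq_nonneg z) (meanNormSqCos_nonneg z)
  rw [hexpand, sub_im, im_ofReal_mul, im_ofReal_mul, conj_im]
  nlinarith [meanNormSqSin_pos hz0]

theorem mul_cos_mul_sin_add_mul_sin_mul_cos_ne_zero {T z₁ z₂ : ℂ} (hT : 0 ≤ T.im)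
    (h₁ : 0 < (conj T * z₁ ^ 2).im) (h₂ : 0 < (conj T * z₂ ^ 2).im) :
    z₁ * cos z₁ * sin z₂ + z₂ * sin z₁ * cos z₂ ≠ 0 := by
  intro h
  have hE₁ := im_conj_mul_mul_cos_mul_conj_sin_neg_s6 hT h₁
  have hE₂ := im_conj_mul_mul_cos_mul_conj_sin_neg_s6 hT h₂
  have hsin₁ : sin z₁ ≠ 0 := by intro h0; simp [h0] at hE₁
  have hweighted : normSq (sin z₂) * (conj T * (z₁ * cos z₁ * conj (sin z₁))) +
      normSq (sin z₁) * (conj T * (z₂ * cos z₂ * conj (sin z₂))) = 0 := by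
    rw [← mul_conj, ← mul_conj]
    linear_combination conj T * conj (sin z₁) * conj (sin z₂) * h
  have him := congrArg im hweighted
  rw [add_im, im_ofReal_mul, im_ofReal_mul, zero_im] at him
  nlinarith [normSq_pos.2 hsin₁, normSq_nonneg (sin z₂)]

lemma exp_two_mul_I (z : ℂ) : exp (2 * I * z) = exp (z * I) ^ 2 := by
  rw [← exp_nat_mul]; ring_nf

lemma one_add_exp_two_mul_I_s6 (z : ℂ) : 1 + exp (2 * I * z) = 2 * exp (z * I) * cos z := by
  rw [exp_two_mul_I, exp_mul_I]
  linear_combination sin z ^ 2 * I_sq - sin_sq_add_cos_sq z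

lemma one_sub_exp_two_mul_I_s6 (z : ℂ) : 1 - exp (2 * I * z) = -2 * I * exp (z * I) * sin z := by
  rw [exp_two_mul_I, exp_mul_I]
  linear_combination sin z ^ 2 * I_sq - sin_sq_add_cos_sq z

/-- The function `A` of the statement, with `μⱼ = mⱼ` and `M̃₂ = M`. -/
noncomputable def dispersion (m₁ m₂ M : ℂ) : ℂ :=
  (1 - exp (2 * I * (m₁ * M)) * exp (2 * I * (m₂ * M))) * (m₁ + m₂) +
    (exp (2 * I * (m₁ * M)) - exp (2 * I * (m₂ * M))) * (m₁ - m₂)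

lemma dispersion_eq (m₁ m₂ M : ℂ) :
    dispersion m₁ m₂ M = -4 * I * exp (m₁ * M * I) * exp (m₂ * M * I) *
      (m₁ * cos (m₁ * M) * sin (m₂ * M) + m₂ * sin (m₁ * M) * cos (m₂ * M)) := by
  calc dispersion m₁ m₂ M
      = m₁ * (1 + exp (2 * I * (m₁ * M))) * (1 - exp (2 * I * (m₂ * M))) +
        m₂ * (1 - exp (2 * I * (m₁ * M))) * (1 + exp (2 * I * (m₂ * M))) := by
          rw [dispersion]; ring
    _ = _ := by
      rw [one_add_exp_two_mul_I_s6, one_add_exp_two_mul_I_s6, one_sub_exp_two_mul_I_s6,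
        one_sub_exp_two_mul_I_s6]
      ring

lemma im_conj_sq_mul_mul_sq (m M : ℂ) :
    (conj (M ^ 2) * (m * M) ^ 2).im = normSq M ^ 2 * (m ^ 2).im := by
  rw [show conj (M ^ 2) * (m * M) ^ 2 = (normSq M ^ 2 : ℝ) * m ^ 2 by
    rw [map_pow, ofReal_pow, ← mul_conj]; ring, im_ofReal_mul]

theorem dispersion_ne_zero {m₁ m₂ M : ℂ} (hM : M ≠ 0) (hM2 : 0 ≤ (M ^ 2).im)
    (h₁ : 0 < (m₁ ^ 2).im) (h₂ : 0 < (m₂ ^ 2).im) : dispersion m₁ m₂ M ≠ 0 := by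
  have hpos (m : ℂ) (hm : 0 < (m ^ 2).im) : 0 < (conj (M ^ 2) * (m * M) ^ 2).im := by
    rw [im_conj_sq_mul_mul_sq]; have := normSq_pos.2 hM; positivity
  have hne := mul_cos_mul_sin_add_mul_sin_mul_cos_ne_zero hM2 (hpos m₁ h₁) (hpos m₂ h₂)
  rw [dispersion_eq]
  refine mul_ne_zero (by simp [exp_ne_zero]) fun h => hne ?_
  linear_combination M * h

end Complex

theorem stmt_6_general (k1 k2 M2 σ2 : ℝ) (hM2 : 0 < M2) (hσ2 : 0 < σ2)
    (μ₁ μ₂ ε₁ ε₂ A : ℂ → ℂ)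
    (hμ₁ : ∀ ξ : ℂ, IsPrincipalSqrt ((k1 : ℂ) ^ 2 - ξ ^ 2) (μ₁ ξ))
    (hμ₂ : ∀ ξ : ℂ, IsPrincipalSqrt ((k2 : ℂ) ^ 2 - ξ ^ 2) (μ₂ ξ))
    (hε₁ : ∀ ξ : ℂ, ε₁ ξ = Complex.exp (2 * Complex.I * μ₁ ξ * ((M2 : ℂ) + Complex.I * (σ2 : ℂ))))
    (hε₂ : ∀ ξ : ℂ, ε₂ ξ = Complex.exp (2 * Complex.I * μ₂ ξ * ((M2 : ℂ) + Complex.I * (σ2 : ℂ))))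
    (hA : ∀ ξ : ℂ, A ξ =
      (1 - ε₁ ξ * ε₂ ξ) * (μ₁ ξ + μ₂ ξ) + (ε₁ ξ - ε₂ ξ) * (μ₁ ξ - μ₂ ξ)) :
    ∀ ξ : ℂ, ξ.re * ξ.im < 0 → A ξ ≠ 0 := by
  intro ξ hξ
  set M : ℂ := (M2 : ℂ) + Complex.I * (σ2 : ℂ)
  have hM : M ≠ 0 := fun h => by simpa [M, hσ2.ne'] using congrArg Complex.im h
  have hM_sq : 0 ≤ (M ^ 2).im := by
    have : (M ^ 2).im = 2 * M2 * σ2 := by simp [M, Complex.im_sq]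
    rw [this]; positivity
  have him (k : ℝ) (m : ℂ) (hm : IsPrincipalSqrt ((k : ℂ) ^ 2 - ξ ^ 2) m) : 0 < (m ^ 2).im := by
    rw [hm.1, Complex.sub_im, ← Complex.ofReal_pow, Complex.ofReal_im, Complex.im_sq]; linarith
  rw [hA, hε₁, hε₂, mul_assoc _ (μ₁ ξ), mul_assoc _ (μ₂ ξ)]
  change Complex.dispersion (μ₁ ξ) (μ₂ ξ) M ≠ 0
  exact Complex.dispersion_ne_zero hM hM_sq (him k1 _ (hμ₁ ξ)) (him k2 _ (hμ₂ ξ))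

/-- Let `0 < k1 < k2`, `M2 > 0`, `σ̄2 > 0`. Then `A(ξ) ≠ 0` for every
`ξ ∈ ℂ` with `Re ξ · Im ξ < 0` (the open second and fourth quadrants). -/
theorem stmt_6 (k1 k2 M2 σ2 : ℝ) (hk1 : 0 < k1) (hk12 : k1 < k2) (hM2 : 0 < M2) (hσ2 : 0 < σ2)
    (μ₁ μ₂ ε₁ ε₂ A : ℂ → ℂ)
    (hμ₁ : ∀ ξ : ℂ, IsPrincipalSqrt ((k1 : ℂ) ^ 2 - ξ ^ 2) (μ₁ ξ))
    (hμ₂ : ∀ ξ : ℂ, IsPrincipalSqrt ((k2 : ℂ) ^ 2 - ξ ^ 2) (μ₂ ξ))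
    (hε₁ : ∀ ξ : ℂ, ε₁ ξ = Complex.exp (2 * Complex.I * μ₁ ξ * ((M2 : ℂ) + Complex.I * (σ2 : ℂ))))
    (hε₂ : ∀ ξ : ℂ, ε₂ ξ = Complex.exp (2 * Complex.I * μ₂ ξ * ((M2 : ℂ) + Complex.I * (σ2 : ℂ))))
    (hA : ∀ ξ : ℂ, A ξ =
      (1 - ε₁ ξ * ε₂ ξ) * (μ₁ ξ + μ₂ ξ) + (ε₁ ξ - ε₂ ξ) * (μ₁ ξ - μ₂ ξ)) :
    ∀ ξ : ℂ, ξ.re * ξ.im < 0 → A ξ ≠ 0 :=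
  stmt_6_general k1 k2 M2 σ2 hM2 hσ2 μ₁ μ₂ ε₁ ε₂ A hμ₁ hμ₂ hε₁ hε₂ hA
end

section
/- Let 0 < k1 < k2, M2 > 0, σ̄2 > 0 and M̃2 = M2 + i·σ̄2. For μ in the closed first quadrant Q = {μ ∈ ℂ : Re μ ≥ 0, Im μ ≥ 0}, let ν(μ) be the principal square root of k2² − k1² + μ², and define B(μ) = (1 − exp(2i·μ·M̃2)·exp(2i·ν(μ)·M̃2))·(μ + ν(μ)) + (exp(2i·μ·M̃2) − exp(2i·ν(μ)·M̃2))·(μ − ν(μ)). Then B(μ) − 2μ → 0 as |μ| → ∞ with μ ∈ Q; in particular |B(μ)| → ∞ as |μ| → ∞ within Q. -/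
/-!
Write `c = k2² − k1²`, `τ = M̃2`, `f = exp(2iμτ)`, `g = exp(2iντ)`. On the closed first quadrant
`Q` one has `|exp(2iζτ)| = exp(−2 Im(ζτ)) ≤ exp(−2 min(M2, σ̄2) |ζ|)`. Since `μ² + c` has
nonnegative imaginary part, its principal root `ν` lies in `Q` too, so `|f|, |g| ≤ 1` and
`|ν + μ| ≥ |μ|`; hence `|ν − μ| = |c| / |ν + μ| ≤ |c| / |μ|`. From
`B − 2μ = (ν − μ) − f g (μ + ν) + (f − g)(μ − ν)` we get
`|B(μ) − 2μ| ≤ 4|c| / |μ| + 2|μ| exp(−2 min(M2, σ̄2) |μ|)`, which tends to `0`.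
-/

open Complex Filter Topology

theorem norm_exp_two_mul_I_mul_le {τ ζ : ℂ} (hτre : 0 ≤ τ.re) (hτim : 0 ≤ τ.im)
    (hre : 0 ≤ ζ.re) (him : 0 ≤ ζ.im) :
    ‖exp (2 * I * ζ * τ)‖ ≤ Real.exp (-(2 * min τ.re τ.im) * ‖ζ‖) := by
  rw [norm_exp, Real.exp_le_exp]
  have hζ : ‖ζ‖ ≤ ζ.re + ζ.im := by
    simpa [abs_of_nonneg hre, abs_of_nonneg him] using norm_le_abs_re_add_abs_im ζ
  have hexp : (2 * I * ζ * τ).re = -(2 * (ζ.re * τ.im + ζ.im * τ.re)) := by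
    simp [mul_re, mul_im]; ring
  rw [hexp]
  nlinarith [mul_le_mul_of_nonneg_left hζ (le_min hτre hτim),
    mul_le_mul_of_nonneg_left (min_le_right τ.re τ.im) hre,
    mul_le_mul_of_nonneg_left (min_le_left τ.re τ.im) him]

theorem norm_exp_two_mul_I_mul_le_one {τ ζ : ℂ} (hτre : 0 ≤ τ.re) (hτim : 0 ≤ τ.im)
    (hre : 0 ≤ ζ.re) (him : 0 ≤ ζ.im) : ‖exp (2 * I * ζ * τ)‖ ≤ 1 := by
  refine (norm_exp_two_mul_I_mul_le hτre hτim hre him).trans (Real.exp_le_one_iff.2 ?_)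
  have := le_min hτre hτim
  nlinarith [norm_nonneg ζ]

namespace IsPrincipalSqrt

variable {z w : ℂ}

theorem re_nonneg (h : IsPrincipalSqrt z w) : 0 ≤ w.re := by
  obtain ⟨-, hpos | ⟨hzero, -⟩⟩ := h
  exacts [hpos.le, hzero.ge]

theorem im_nonneg (h : IsPrincipalSqrt z w) (hz : 0 ≤ z.im) : 0 ≤ w.im := by
  obtain ⟨hsq, hpos | ⟨-, him⟩⟩ := h
  · have hzim : z.im = 2 * w.re * w.im := by rw [← hsq]; simp [sq, mul_im]; ring
    nlinarith
  · exact him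

end IsPrincipalSqrt

theorem norm_le_norm_add_of_re_im_nonneg {w z : ℂ} (hwre : 0 ≤ w.re) (hwim : 0 ≤ w.im)
    (hzre : 0 ≤ z.re) (hzim : 0 ≤ z.im) : ‖z‖ ≤ ‖w + z‖ := by
  rw [← sq_le_sq₀ (norm_nonneg _) (norm_nonneg _), Complex.sq_norm, Complex.sq_norm, normSq_apply, normSq_apply,
    add_re, add_im]
  nlinarith [mul_nonneg hwre hzre, mul_nonneg hwim hzim]

theorem IsPrincipalSqrt.norm_sub_mul_norm_le {c : ℝ} {μ w : ℂ}
    (h : IsPrincipalSqrt (c + μ ^ 2) w) (hre : 0 ≤ μ.re) (him : 0 ≤ μ.im) :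
    ‖w - μ‖ * ‖μ‖ ≤ |c| := by
  have hwim : 0 ≤ w.im := h.im_nonneg (by simp [sq, mul_im]; positivity)
  calc ‖w - μ‖ * ‖μ‖ ≤ ‖w - μ‖ * ‖w + μ‖ := by
        gcongr; exact norm_le_norm_add_of_re_im_nonneg h.re_nonneg hwim hre him
    _ = ‖(c : ℂ)‖ := by rw [← norm_mul]; congr 1; linear_combination h.1
    _ = |c| := by rw [norm_real, Real.norm_eq_abs]

theorem norm_sub_two_mul_le (f g μ ν : ℂ) (hf : ‖f‖ ≤ 1) (hg : ‖g‖ ≤ 1) :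
    ‖(1 - f * g) * (μ + ν) + (f - g) * (μ - ν) - 2 * μ‖ ≤ 4 * ‖ν - μ‖ + 2 * ‖f‖ * ‖μ‖ := by
  have hsplit : (1 - f * g) * (μ + ν) + (f - g) * (μ - ν) - 2 * μ
      = (ν - μ) - f * g * (2 * μ + (ν - μ)) - (f - g) * (ν - μ) := by ring
  have hfg : ‖f * g * (2 * μ + (ν - μ))‖ ≤ ‖f‖ * ‖g‖ * (2 * ‖μ‖ + ‖ν - μ‖) := by
    rw [norm_mul, norm_mul]
    gcongr
    exact (norm_add_le _ _).trans_eq (by rw [norm_mul, Complex.norm_two])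
  have hdiff : ‖(f - g) * (ν - μ)‖ ≤ (‖f‖ + ‖g‖) * ‖ν - μ‖ := by
    rw [norm_mul]; gcongr; exact norm_sub_le _ _
  rw [hsplit]
  nlinarith [norm_sub_le (ν - μ - f * g * (2 * μ + (ν - μ))) ((f - g) * (ν - μ)),
    norm_sub_le (ν - μ) (f * g * (2 * μ + (ν - μ))), norm_nonneg f, norm_nonneg g,
    norm_nonneg μ, norm_nonneg (ν - μ), mul_le_mul_of_nonneg_left hg (norm_nonneg f)]

theorem norm_sub_two_mul_le_of_isPrincipalSqrt {c : ℝ} {τ μ ν : ℂ} (hτre : 0 ≤ τ.re)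
    (hτim : 0 ≤ τ.im) (hν : IsPrincipalSqrt (c + μ ^ 2) ν) (hre : 0 ≤ μ.re) (him : 0 ≤ μ.im)
    (hμ : μ ≠ 0) :
    ‖(1 - exp (2 * I * μ * τ) * exp (2 * I * ν * τ)) * (μ + ν) +
        (exp (2 * I * μ * τ) - exp (2 * I * ν * τ)) * (μ - ν) - 2 * μ‖ ≤
      4 * |c| / ‖μ‖ + 2 * ‖μ‖ * Real.exp (-(2 * min τ.re τ.im) * ‖μ‖) := by
  have hνim : 0 ≤ ν.im := hν.im_nonneg (by simp [sq, mul_im]; positivity)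
  have hd : ‖ν - μ‖ ≤ |c| / ‖μ‖ :=
    (le_div_iff₀ (norm_pos_iff.2 hμ)).2 (hν.norm_sub_mul_norm_le hre him)
  calc _ ≤ 4 * ‖ν - μ‖ + 2 * ‖exp (2 * I * μ * τ)‖ * ‖μ‖ :=
        norm_sub_two_mul_le _ _ _ _ (norm_exp_two_mul_I_mul_le_one hτre hτim hre him)
          (norm_exp_two_mul_I_mul_le_one hτre hτim hν.re_nonneg hνim)
    _ ≤ 4 * (|c| / ‖μ‖) + 2 * Real.exp (-(2 * min τ.re τ.im) * ‖μ‖) * ‖μ‖ := by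
        gcongr; exact norm_exp_two_mul_I_mul_le hτre hτim hre him
    _ = _ := by ring

theorem tendsto_div_add_mul_exp_neg_mul_atTop (C D : ℝ) {m : ℝ} (hm : 0 < m) :
    Tendsto (fun a => C / a + D * a * Real.exp (-m * a)) atTop (𝓝 0) := by
  have hexp : Tendsto (fun a => (m * a) ^ 1 * Real.exp (-(m * a))) atTop (𝓝 0) :=
    (Real.tendsto_pow_mul_exp_neg_atTop_nhds_zero 1).comp (tendsto_id.const_mul_atTop hm)
  have hsum := (tendsto_const_nhds (x := C).div_atTop tendsto_id).add (hexp.const_mul (D / m))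
  rw [mul_zero, add_zero] at hsum
  refine hsum.congr fun a => ?_
  simp only [id, pow_one, neg_mul]
  field_simp

theorem stmt_8_general (k1 k2 M2 σ2 : ℝ) (hM2 : 0 < M2) (hσ2 : 0 < σ2)
    (ν B : ℂ → ℂ)
    (hν : ∀ μ : ℂ, IsPrincipalSqrt ((k2 : ℂ) ^ 2 - (k1 : ℂ) ^ 2 + μ ^ 2) (ν μ))
    (hB : ∀ μ : ℂ, B μ =
      (1 - Complex.exp (2 * Complex.I * μ * ((M2 : ℂ) + Complex.I * (σ2 : ℂ))) *
            Complex.exp (2 * Complex.I * ν μ * ((M2 : ℂ) + Complex.I * (σ2 : ℂ)))) * (μ + ν μ) +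
      (Complex.exp (2 * Complex.I * μ * ((M2 : ℂ) + Complex.I * (σ2 : ℂ))) -
            Complex.exp (2 * Complex.I * ν μ * ((M2 : ℂ) + Complex.I * (σ2 : ℂ)))) * (μ - ν μ)) :
    (∀ ε : ℝ, 0 < ε → ∃ R : ℝ, ∀ μ : ℂ, 0 ≤ μ.re → 0 ≤ μ.im →
      R ≤ ‖μ‖ → ‖B μ - 2 * μ‖ < ε) ∧
    (∀ M : ℝ, ∃ R : ℝ, ∀ μ : ℂ, 0 ≤ μ.re → 0 ≤ μ.im →
      R ≤ ‖μ‖ → M ≤ ‖B μ‖) := by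
  have hbound : ∀ μ : ℂ, 0 ≤ μ.re → 0 ≤ μ.im → μ ≠ 0 → ‖B μ - 2 * μ‖ ≤
      4 * |k2 ^ 2 - k1 ^ 2| / ‖μ‖ + 2 * ‖μ‖ * Real.exp (-(2 * min M2 σ2) * ‖μ‖) := by
    intro μ hre him hμ
    have hνμ : IsPrincipalSqrt ((k2 ^ 2 - k1 ^ 2 : ℝ) + μ ^ 2) (ν μ) := by
      push_cast; exact hν μ
    simpa [hB] using norm_sub_two_mul_le_of_isPrincipalSqrt (τ := M2 + I * σ2)
      (by simpa using hM2.le) (by simpa using hσ2.le) hνμ hre him hμ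
  have hsmall : ∀ ε : ℝ, 0 < ε → ∃ R : ℝ, ∀ μ : ℂ, 0 ≤ μ.re → 0 ≤ μ.im →
      R ≤ ‖μ‖ → ‖B μ - 2 * μ‖ < ε := by
    intro ε hε
    obtain ⟨R, hR⟩ := eventually_atTop.1 <|
      (tendsto_div_add_mul_exp_neg_mul_atTop (4 * |k2 ^ 2 - k1 ^ 2|) 2
        (by positivity : 0 < 2 * min M2 σ2)).eventually (gt_mem_nhds hε)
    refine ⟨max R 1, fun μ hre him hμ => (hbound μ hre him ?_).trans_lt (hR _ (le_of_max_le_left hμ))⟩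
    rw [← norm_pos_iff]
    linarith [le_of_max_le_right hμ]
  refine ⟨hsmall, fun M => ?_⟩
  obtain ⟨R, hR⟩ := hsmall 1 one_pos
  refine ⟨max R ((M + 1) / 2), fun μ hre him hμ => ?_⟩
  have hclose := hR μ hre him (le_of_max_le_left hμ)
  have hlarge := le_of_max_le_right hμ
  have htri := norm_sub_norm_le (2 * μ) (B μ)
  rw [norm_sub_rev, norm_mul, Complex.norm_two] at htri
  linarith

/-- Let `0 < k1 < k2`, `M2 > 0`, `σ̄2 > 0`, `M̃2 = M2 + i σ̄2`. With `ν(μ)`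
the principal square root of `k2² − k1² + μ²`, and
`B(μ) = (1 − e^{2iμM̃2} e^{2iν(μ)M̃2})(μ + ν(μ)) + (e^{2iμM̃2} − e^{2iν(μ)M̃2})(μ − ν(μ))`,
one has `B(μ) − 2μ → 0` as `|μ| → ∞` within the closed first quadrant; in particular
`|B(μ)| → ∞` as `|μ| → ∞` within the closed first quadrant. -/
theorem stmt_8 (k1 k2 M2 σ2 : ℝ) (hk1 : 0 < k1) (hk12 : k1 < k2) (hM2 : 0 < M2) (hσ2 : 0 < σ2)
    (ν B : ℂ → ℂ)
    (hν : ∀ μ : ℂ, IsPrincipalSqrt ((k2 : ℂ) ^ 2 - (k1 : ℂ) ^ 2 + μ ^ 2) (ν μ))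
    (hB : ∀ μ : ℂ, B μ =
      (1 - Complex.exp (2 * Complex.I * μ * ((M2 : ℂ) + Complex.I * (σ2 : ℂ))) *
            Complex.exp (2 * Complex.I * ν μ * ((M2 : ℂ) + Complex.I * (σ2 : ℂ)))) * (μ + ν μ) +
      (Complex.exp (2 * Complex.I * μ * ((M2 : ℂ) + Complex.I * (σ2 : ℂ))) -
            Complex.exp (2 * Complex.I * ν μ * ((M2 : ℂ) + Complex.I * (σ2 : ℂ)))) * (μ - ν μ)) :
    (∀ ε : ℝ, 0 < ε → ∃ R : ℝ, ∀ μ : ℂ, 0 ≤ μ.re → 0 ≤ μ.im →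
      R ≤ ‖μ‖ → ‖B μ - 2 * μ‖ < ε) ∧
    (∀ M : ℝ, ∃ R : ℝ, ∀ μ : ℂ, 0 ≤ μ.re → 0 ≤ μ.im →
      R ≤ ‖μ‖ → M ≤ ‖B μ‖) :=
  stmt_8_general k1 k2 M2 σ2 hM2 hσ2 ν B hν hB
end

section
/- Let M1, σ̄1, M2, σ̄2 > 0 and let n be a nonzero integer. Suppose a, b, w ∈ ℂ satisfy Re a ∈ [(2|n|−2)·M1, (2|n|+2)·M1], Im a ∈ [(2|n|−2)·σ̄1, (2|n|+2)·σ̄1], Re b ∈ [0, 2·M2], Im b ∈ [0, 2·σ̄2], w² = a² + b², and Im w ≥ 0. Then Im w ≥ (2|n|−2)²·σ̄1 / √((2|n|+2)² + 4·(M2/M1)²). -/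
/-!
Comparing real and imaginary parts of `w ^ 2 = a ^ 2 + b ^ 2` gives
`Re w · Im w = Re a · Im a + Re b · Im b`, which is bounded below by the product of the lower
bounds on `Re a` and `Im a`; combining the real part with `‖w‖² ≤ ‖a‖² + ‖b‖²` gives
`(Re w)² ≤ (Re a)² + (Re b)²`, so `Re w` is bounded above. Since `Im w ≥ 0`, dividing the lower
bound on `Re w · Im w` by the upper bound on `|Re w|` bounds `Im w` from below.
-/

namespace Complex

variable {a b w : ℂ}

theorem re_mul_im_of_sq_eq_add_sq (hw : w ^ 2 = a ^ 2 + b ^ 2) :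
    w.re * w.im = a.re * a.im + b.re * b.im := by
  have him := congrArg Complex.im hw
  simp only [sq, mul_im, add_im] at him
  linarith

theorem sq_re_le_of_sq_eq_add_sq (hw : w ^ 2 = a ^ 2 + b ^ 2) :
    w.re ^ 2 ≤ a.re ^ 2 + b.re ^ 2 := by
  have hnorm : ‖w‖ ^ 2 ≤ ‖a‖ ^ 2 + ‖b‖ ^ 2 := by
    simpa only [← norm_pow, hw] using norm_add_le (a ^ 2) (b ^ 2)
  have hre := congrArg Complex.re hw
  simp only [Complex.sq_norm, normSq_apply] at hnorm
  simp only [sq, mul_re, add_re] at hre ⊢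
  linarith

theorem mul_div_sqrt_le_im_of_sq_eq_add_sq {α β A B : ℝ} (hα : 0 ≤ α) (hβ : 0 ≤ β)
    (hαa : α ≤ a.re) (hβa : β ≤ a.im) (hA : |a.re| ≤ A) (hB : |b.re| ≤ B)
    (hb : 0 ≤ b.re * b.im) (hw : w ^ 2 = a ^ 2 + b ^ 2) (hw' : 0 ≤ w.im) :
    α * β / √(A ^ 2 + B ^ 2) ≤ w.im := by
  have hprod : α * β ≤ w.re * w.im := by
    rw [re_mul_im_of_sq_eq_add_sq hw]
    linarith [mul_le_mul hαa hβa hβ (hα.trans hαa)]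
  have hre : |w.re| ≤ √(A ^ 2 + B ^ 2) := by
    refine Real.abs_le_sqrt ((sq_re_le_of_sq_eq_add_sq hw).trans ?_)
    exact add_le_add (sq_le_sq.mpr (hA.trans (le_abs_self A)))
      (sq_le_sq.mpr (hB.trans (le_abs_self B)))
  rcases (Real.sqrt_nonneg (A ^ 2 + B ^ 2)).eq_or_lt with h0 | hpos
  · rw [← h0, div_zero]
    exact hw'
  · rw [div_le_iff₀ hpos]
    calc α * β ≤ w.re * w.im := hprod
      _ ≤ |w.re| * w.im := mul_le_mul_of_nonneg_right (le_abs_self _) hw'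
      _ ≤ √(A ^ 2 + B ^ 2) * w.im := mul_le_mul_of_nonneg_right hre hw'
      _ = w.im * √(A ^ 2 + B ^ 2) := mul_comm _ _

end Complex

theorem stmt_12_general (M1 σ1 M2 : ℝ) (hM1 : 0 < M1) (hσ1 : 0 < σ1)
    (n : ℤ) (hn : n ≠ 0) (a b w : ℂ)
    (ha1 : (2 * |(n : ℝ)| - 2) * M1 ≤ a.re) (ha2 : a.re ≤ (2 * |(n : ℝ)| + 2) * M1)
    (ha3 : (2 * |(n : ℝ)| - 2) * σ1 ≤ a.im)
    (hb1 : 0 ≤ b.re) (hb2 : b.re ≤ 2 * M2) (hb3 : 0 ≤ b.im)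
    (hw : w ^ 2 = a ^ 2 + b ^ 2) (hw' : 0 ≤ w.im) :
    (2 * |(n : ℝ)| - 2) ^ 2 * σ1 / Real.sqrt ((2 * |(n : ℝ)| + 2) ^ 2 + 4 * (M2 / M1) ^ 2) ≤
      w.im := by
  set s := 2 * |(n : ℝ)| - 2
  set t := 2 * |(n : ℝ)| + 2
  have hs : 0 ≤ s := by
    have : (1 : ℝ) ≤ |(n : ℝ)| := by exact_mod_cast Int.one_le_abs hn
    linarith
  have hsM1 : 0 ≤ s * M1 := mul_nonneg hs hM1.le
  have hsqrt : √((t * M1) ^ 2 + (2 * M2) ^ 2) = M1 * √(t ^ 2 + 4 * (M2 / M1) ^ 2) := by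
    rw [show (t * M1) ^ 2 + (2 * M2) ^ 2 = M1 ^ 2 * (t ^ 2 + 4 * (M2 / M1) ^ 2) by
      field_simp; ring, Real.sqrt_mul (sq_nonneg M1), Real.sqrt_sq hM1.le]
  have key := Complex.mul_div_sqrt_le_im_of_sq_eq_add_sq hsM1 (mul_nonneg hs hσ1.le) ha1 ha3
    (abs_le.mpr ⟨by linarith, ha2⟩) (abs_le.mpr ⟨by linarith, hb2⟩) (mul_nonneg hb1 hb3) hw hw'
  convert key using 1
  rw [hsqrt]
  field_simp

/-- Let `M1, σ̄1, M2, σ̄2 > 0` and `n` a nonzero integer. If `a, b, w ∈ ℂ`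
satisfy `Re a ∈ [(2|n|−2)M1, (2|n|+2)M1]`, `Im a ∈ [(2|n|−2)σ̄1, (2|n|+2)σ̄1]`,
`Re b ∈ [0, 2M2]`, `Im b ∈ [0, 2σ̄2]`, `w² = a² + b²` and `Im w ≥ 0`, then
`Im w ≥ (2|n|−2)² σ̄1 / √((2|n|+2)² + 4 (M2/M1)²)`. -/
theorem stmt_12 (M1 σ1 M2 σ2 : ℝ) (hM1 : 0 < M1) (hσ1 : 0 < σ1) (hM2 : 0 < M2) (hσ2 : 0 < σ2)
    (n : ℤ) (hn : n ≠ 0) (a b w : ℂ)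
    (ha1 : (2 * |(n : ℝ)| - 2) * M1 ≤ a.re) (ha2 : a.re ≤ (2 * |(n : ℝ)| + 2) * M1)
    (ha3 : (2 * |(n : ℝ)| - 2) * σ1 ≤ a.im) (ha4 : a.im ≤ (2 * |(n : ℝ)| + 2) * σ1)
    (hb1 : 0 ≤ b.re) (hb2 : b.re ≤ 2 * M2) (hb3 : 0 ≤ b.im) (hb4 : b.im ≤ 2 * σ2)
    (hw : w ^ 2 = a ^ 2 + b ^ 2) (hw' : 0 ≤ w.im) :
    (2 * |(n : ℝ)| - 2) ^ 2 * σ1 / Real.sqrt ((2 * |(n : ℝ)| + 2) ^ 2 + 4 * (M2 / M1) ^ 2) ≤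
      w.im :=
  stmt_12_general M1 σ1 M2 hM1 hσ1 n hn a b w ha1 ha2 ha3 hb1 hb2 hb3 hw hw'
end

section
/- Let 0 < k1 < k2, M2 > 0, σ̄2 > 0, M̃2 = M2 + i·σ̄2, and let δ0 be a real with 0 < δ0 ≤ (√2/4)·k1·σ̄2. Let ξ = ξ1 + i·ξ2 with 0 ≤ ξ1 ≤ (√2/2)·k1 and 0 ≤ ξ2 ≤ δ0/M2, and let j ∈ {1,2}. Then for every real x2 with 0 ≤ x2 ≤ M2: Im(μ_j(ξ)·(M̃2 − x2)) ≥ max{(√2/2)·k1·σ̄2 − δ0, δ0} and Im(μ_j(ξ)·x2) ≥ −δ0. -/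
/-!
Write `μ = a + i b` for either square root. Comparing real and imaginary parts of
`μ² = k² − (ξ1 + i ξ2)²` gives `a² − b² = k² − ξ1² + ξ2²` and `a b = −ξ1 ξ2`. Since `ξ1² ≤ k²/2`,
the first identity forces `a ≥ (√2/2) k > 0`; the second then gives `−ξ2 ≤ b ≤ 0`, because
`ξ1 ≤ a`. With `Im(μ (M̃2 − x2)) = a σ̄2 + b (M2 − x2)`, `Im(μ x2) = b x2` and `ξ2 M2 ≤ δ0`, both
inequalities follow, using `k1 ≤ k2` to treat `j = 2` like `j = 1`.
-/

open Complex

section SqrtOfSqSubSq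

variable {k ξ1 ξ2 : ℝ} {μ : ℂ}

lemma re_sq_sub_im_sq_and_re_mul_im_of_sq_eq
    (h : μ ^ 2 = (k : ℂ) ^ 2 - ((ξ1 : ℂ) + I * (ξ2 : ℂ)) ^ 2) :
    μ.re ^ 2 - μ.im ^ 2 = k ^ 2 - ξ1 ^ 2 + ξ2 ^ 2 ∧ μ.re * μ.im = -(ξ1 * ξ2) := by
  have hre := congrArg re h
  have him := congrArg im h
  simp only [pow_two, mul_re, mul_im, sub_re, sub_im, add_re, add_im, I_re, I_im,
    ofReal_re, ofReal_im] at hre him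
  constructor <;> linarith

lemma IsPrincipalSqrt.bounds_of_sq_sub_sq (hk : 0 < k) (hξ1 : 0 ≤ ξ1)
    (hξ1' : ξ1 ≤ Real.sqrt 2 / 2 * k) (hξ2 : 0 ≤ ξ2)
    (hμ : IsPrincipalSqrt ((k : ℂ) ^ 2 - ((ξ1 : ℂ) + I * (ξ2 : ℂ)) ^ 2) μ) :
    Real.sqrt 2 / 2 * k ≤ μ.re ∧ -ξ2 ≤ μ.im ∧ μ.im ≤ 0 := by
  obtain ⟨hsq, hbranch⟩ := hμ
  obtain ⟨hdiff, hprod⟩ := re_sq_sub_im_sq_and_re_mul_im_of_sq_eq hsq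
  have hsqrt2 : Real.sqrt 2 ^ 2 = 2 := Real.sq_sqrt zero_le_two
  have hξ1_sq : 2 * ξ1 ^ 2 ≤ k ^ 2 := by
    have : ξ1 ^ 2 ≤ (Real.sqrt 2 / 2 * k) ^ 2 := pow_le_pow_left₀ hξ1 hξ1' 2
    nlinarith
  have hre_pos : 0 < μ.re := by
    rcases hbranch with h | ⟨h, -⟩
    · exact h
    · nlinarith [sq_nonneg μ.im, sq_nonneg ξ2]
  have hre : Real.sqrt 2 / 2 * k ≤ μ.re := by
    have hre_sq : (Real.sqrt 2 / 2 * k) ^ 2 ≤ μ.re ^ 2 := by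
      nlinarith [sq_nonneg μ.im, sq_nonneg ξ2]
    exact pow_le_pow_iff_left₀ (by positivity) hre_pos.le two_ne_zero |>.mp hre_sq
  have him_nonpos : μ.im ≤ 0 := by nlinarith [mul_nonneg hξ1 hξ2]
  refine ⟨hre, ?_, him_nonpos⟩
  nlinarith [mul_le_mul_of_nonneg_right (hξ1'.trans hre) hξ2]

end SqrtOfSqSubSq

lemma im_mul_add_I_mul_sub (μ : ℂ) (M σ x : ℝ) :
    (μ * (((M : ℂ) + I * (σ : ℂ)) - (x : ℂ))).im = μ.re * σ + μ.im * (M - x) := by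
  simp only [mul_im, sub_re, sub_im, add_re, add_im, mul_re, I_re, I_im, ofReal_re, ofReal_im]
  ring

theorem stmt_14_general (k1 k2 M2 σ2 δ0 : ℝ) (hk1 : 0 < k1) (hk12 : k1 < k2) (hM2 : 0 < M2)
    (hσ2 : 0 < σ2) (hδ0' : δ0 ≤ Real.sqrt 2 / 4 * k1 * σ2)
    (μ₁ μ₂ : ℂ → ℂ)
    (hμ₁ : ∀ ξ : ℂ, IsPrincipalSqrt ((k1 : ℂ) ^ 2 - ξ ^ 2) (μ₁ ξ))
    (hμ₂ : ∀ ξ : ℂ, IsPrincipalSqrt ((k2 : ℂ) ^ 2 - ξ ^ 2) (μ₂ ξ))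
    (ξ1 ξ2 : ℝ) (hξ1 : 0 ≤ ξ1) (hξ1' : ξ1 ≤ Real.sqrt 2 / 2 * k1)
    (hξ2 : 0 ≤ ξ2) (hξ2' : ξ2 ≤ δ0 / M2) :
    ∀ x2 : ℝ, 0 ≤ x2 → x2 ≤ M2 →
      ∀ μ ∈ ({μ₁ ((ξ1 : ℂ) + Complex.I * (ξ2 : ℂ)),
              μ₂ ((ξ1 : ℂ) + Complex.I * (ξ2 : ℂ))} : Set ℂ),
        max (Real.sqrt 2 / 2 * k1 * σ2 - δ0) δ0 ≤
          (μ * (((M2 : ℂ) + Complex.I * (σ2 : ℂ)) - (x2 : ℂ))).im ∧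
        -δ0 ≤ (μ * (x2 : ℂ)).im := by
  intro x2 hx2 hx2' μ hμ
  have hξ2M2 : ξ2 * M2 ≤ δ0 := (le_div_iff₀ hM2).mp hξ2'
  have hk1_k2 : Real.sqrt 2 / 2 * k1 ≤ Real.sqrt 2 / 2 * k2 := by gcongr
  obtain ⟨hre, him_lower, him_upper⟩ :
      Real.sqrt 2 / 2 * k1 ≤ μ.re ∧ -ξ2 ≤ μ.im ∧ μ.im ≤ 0 := by
    rcases hμ with rfl | rfl
    · exact (hμ₁ _).bounds_of_sq_sub_sq hk1 hξ1 hξ1' hξ2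
    · obtain ⟨hre, him⟩ :=
        (hμ₂ _).bounds_of_sq_sub_sq (hk1.trans hk12) hξ1 (hξ1'.trans hk1_k2) hξ2
      exact ⟨hk1_k2.trans hre, him⟩
  have hre_σ2 : Real.sqrt 2 / 2 * k1 * σ2 ≤ μ.re * σ2 := by gcongr
  have him_M2 : -δ0 ≤ μ.im * (M2 - x2) := by nlinarith
  have him_x2 : -δ0 ≤ μ.im * x2 := by nlinarith
  rw [im_mul_add_I_mul_sub, im_mul_ofReal]
  exact ⟨max_le (by linarith) (by linarith), him_x2⟩

/-- Let `0 < k1 < k2`, `M2 > 0`, `σ̄2 > 0`, `M̃2 = M2 + i σ̄2`, and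
`0 < δ0 ≤ (√2/4) k1 σ̄2`. If `ξ = ξ1 + i ξ2` with `0 ≤ ξ1 ≤ (√2/2) k1` and `0 ≤ ξ2 ≤ δ0/M2`,
then for `j = 1, 2` and every `x2 ∈ [0, M2]`:
`Im(μ_j(ξ)(M̃2 − x2)) ≥ max((√2/2) k1 σ̄2 − δ0, δ0)` and `Im(μ_j(ξ) x2) ≥ −δ0`. -/
theorem stmt_14 (k1 k2 M2 σ2 δ0 : ℝ) (hk1 : 0 < k1) (hk12 : k1 < k2) (hM2 : 0 < M2)
    (hσ2 : 0 < σ2) (hδ0 : 0 < δ0) (hδ0' : δ0 ≤ Real.sqrt 2 / 4 * k1 * σ2)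
    (μ₁ μ₂ : ℂ → ℂ)
    (hμ₁ : ∀ ξ : ℂ, IsPrincipalSqrt ((k1 : ℂ) ^ 2 - ξ ^ 2) (μ₁ ξ))
    (hμ₂ : ∀ ξ : ℂ, IsPrincipalSqrt ((k2 : ℂ) ^ 2 - ξ ^ 2) (μ₂ ξ))
    (ξ1 ξ2 : ℝ) (hξ1 : 0 ≤ ξ1) (hξ1' : ξ1 ≤ Real.sqrt 2 / 2 * k1)
    (hξ2 : 0 ≤ ξ2) (hξ2' : ξ2 ≤ δ0 / M2) :
    ∀ x2 : ℝ, 0 ≤ x2 → x2 ≤ M2 →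
      ∀ μ ∈ ({μ₁ ((ξ1 : ℂ) + Complex.I * (ξ2 : ℂ)),
              μ₂ ((ξ1 : ℂ) + Complex.I * (ξ2 : ℂ))} : Set ℂ),
        max (Real.sqrt 2 / 2 * k1 * σ2 - δ0) δ0 ≤
          (μ * (((M2 : ℂ) + Complex.I * (σ2 : ℂ)) - (x2 : ℂ))).im ∧
        -δ0 ≤ (μ * (x2 : ℂ)).im :=
  stmt_14_general k1 k2 M2 σ2 δ0 hk1 hk12 hM2 hσ2 hδ0' μ₁ μ₂ hμ₁ hμ₂ ξ1 ξ2 hξ1 hξ1' hξ2 hξ2'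
end

section
/- Fix κ > 1 and c0 > 0. There exist δ0 > 0 and C > 0, depending only on κ and c0, with the following property: for all k1 > 0, with k2 = κ·k1, all σ̄2 ≥ c0/k1 and all M2 ≥ c0/k1, and every ξ = ξ1 + i·ξ2 ∈ ℂ with 0 ≤ ξ1 ≤ (√2/2)·k1 and 0 ≤ ξ2 ≤ δ0/M2, one has A(ξ) ≠ 0 and |μ₁(ξ) + μ₂(ξ)| ≤ C·|A(ξ)|. -/
open ComplexConjugate

theorem IsPrincipalSqrt.half_le_re_and_abs_im_le {k : ℝ} {ξ μ : ℂ} (hk : 0 < k)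
    (h : IsPrincipalSqrt ((k : ℂ) ^ 2 - ξ ^ 2) μ) (hre₀ : 0 ≤ ξ.re)
    (hre : ξ.re ≤ Real.sqrt 2 / 2 * k) (him : 0 ≤ ξ.im) :
    k / 2 ≤ μ.re ∧ |μ.im| ≤ ξ.im := by
  obtain ⟨hsq, hbranch⟩ := h
  have hsq_re := congrArg Complex.re hsq
  have hsq_im := congrArg Complex.im hsq
  simp only [pow_two, Complex.mul_re, Complex.mul_im, Complex.sub_re, Complex.sub_im,
    Complex.ofReal_re, Complex.ofReal_im] at hsq_re hsq_im
  have hsqrt2 : Real.sqrt 2 ^ 2 = 2 := Real.sq_sqrt (by norm_num)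
  have hre_sq : 2 * ξ.re ^ 2 ≤ k ^ 2 := by nlinarith [Real.sqrt_nonneg 2]
  have hμre : 0 < μ.re := by
    rcases hbranch with h | ⟨h, -⟩
    · exact h
    · rw [h] at hsq_re; nlinarith
  have hre_le : ξ.re ≤ μ.re := by nlinarith
  have hprod : μ.re * μ.im = -(ξ.re * ξ.im) := by linarith
  have hμim : μ.im ≤ 0 := by nlinarith [mul_nonneg hre₀ him]
  refine ⟨by nlinarith, ?_⟩
  rw [abs_of_nonpos hμim]
  nlinarith [mul_le_mul_of_nonneg_right hre_le him]

theorem norm_exp_two_I_mul_le {μ : ℂ} {M σ c : ℝ} (hM : 0 ≤ M) (hre : c ≤ 2 * μ.re * σ)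
    (him : |μ.im| * M ≤ c / 4) :
    ‖Complex.exp (2 * Complex.I * μ * ((M : ℂ) + Complex.I * (σ : ℂ)))‖ ≤ Real.exp (-(c / 2)) := by
  have hexp_re : (2 * Complex.I * μ * ((M : ℂ) + Complex.I * (σ : ℂ))).re
      = -2 * (μ.re * σ + μ.im * M) := by
    simp only [Complex.mul_re, Complex.mul_im, Complex.add_re, Complex.add_im, Complex.I_re,
      Complex.I_im, Complex.ofReal_re, Complex.ofReal_im, Complex.re_ofNat, Complex.im_ofNat]
    ring
  rw [Complex.norm_exp, hexp_re, Real.exp_le_exp]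
  nlinarith [mul_le_mul_of_nonneg_right (neg_abs_le μ.im) hM]

theorem abs_im_le_and_norm_exp_le {c k σ M t a : ℝ} {μ : ℂ} (hc : 0 < c) (hk : 0 < k)
    (hσ : c / k ≤ σ) (hM : c / k ≤ M) (ha₀ : 0 ≤ a) (ha : a ≤ 1) (ht : t ≤ c * a / 8 / M)
    (hre : k / 2 ≤ μ.re) (him : |μ.im| ≤ t) :
    |μ.im| ≤ a / 4 * μ.re ∧
      ‖Complex.exp (2 * Complex.I * μ * ((M : ℂ) + Complex.I * (σ : ℂ)))‖
        ≤ Real.exp (-(c / 2)) := by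
  have hck : 0 < c / k := div_pos hc hk
  have hσ' : c ≤ k * σ := by rwa [div_le_iff₀' hk] at hσ
  have htM : t * M ≤ c * a / 8 := by rwa [le_div_iff₀ (hck.trans_le hM)] at ht
  have htk : t ≤ a / 8 * k :=
    calc t ≤ c * a / 8 / (c / k) := ht.trans (div_le_div_of_nonneg_left (by positivity) hck hM)
      _ = a / 8 * k := by field_simp
  refine ⟨by nlinarith, norm_exp_two_I_mul_le (hck.le.trans hM) (by nlinarith) ?_⟩
  nlinarith [mul_le_mul_of_nonneg_right him (hck.le.trans hM)]

theorem re_mul_one_sub_mul_conj_one_add (μ ε : ℂ) :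
    (μ * (1 - ε) * conj (1 + ε)).re = μ.re * (1 - ‖ε‖ ^ 2) + 2 * μ.im * ε.im := by
  rw [← Complex.normSq_eq_norm_sq, Complex.normSq_apply]
  simp only [map_add, map_one, Complex.mul_re, Complex.mul_im, Complex.sub_re, Complex.sub_im,
    Complex.add_re, Complex.add_im, Complex.one_re, Complex.one_im, Complex.conj_re,
    Complex.conj_im]
  ring

theorem one_sub_mul_re_le_re_mul_one_sub_mul_conj {μ ε : ℂ} {ρ : ℝ} (hρ : ρ < 1)
    (hε : ‖ε‖ ≤ ρ) (hμ : |μ.im| ≤ (1 - ρ) / 4 * μ.re) :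
    (1 - ρ) * μ.re ≤ (μ * (1 - ε) * conj (1 + ε)).re := by
  rw [re_mul_one_sub_mul_conj_one_add]
  have hρ₀ : 0 ≤ ρ := (norm_nonneg ε).trans hε
  have hμre : 0 ≤ μ.re := by nlinarith [abs_nonneg μ.im]
  have hεsq : ‖ε‖ ^ 2 ≤ ρ ^ 2 := pow_le_pow_left₀ (norm_nonneg ε) hε 2
  have hcross : -(2 * |μ.im| * ρ) ≤ 2 * μ.im * ε.im := by
    have h := abs_mul μ.im ε.im ▸ neg_abs_le (μ.im * ε.im)
    nlinarith [mul_le_mul_of_nonneg_left ((Complex.abs_im_le_norm ε).trans hε) (abs_nonneg μ.im)]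
  nlinarith [mul_le_mul_of_nonneg_left hεsq hμre, mul_le_mul_of_nonneg_right hμ hρ₀,
    mul_nonneg (mul_nonneg hμre hρ₀) (sub_nonneg.mpr hρ.le)]

theorem one_sub_pow_three_mul_re_add_le_norm {μ₁ μ₂ ε₁ ε₂ : ℂ} {ρ : ℝ} (hρ : ρ < 1)
    (hε₁ : ‖ε₁‖ ≤ ρ) (hε₂ : ‖ε₂‖ ≤ ρ)
    (hμ₁ : |μ₁.im| ≤ (1 - ρ) / 4 * μ₁.re) (hμ₂ : |μ₂.im| ≤ (1 - ρ) / 4 * μ₂.re) :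
    (1 - ρ) ^ 3 * (μ₁.re + μ₂.re)
      ≤ (1 + ρ) ^ 2 * ‖μ₁ * (1 + ε₁) * (1 - ε₂) + μ₂ * (1 - ε₁) * (1 + ε₂)‖ := by
  set A := μ₁ * (1 + ε₁) * (1 - ε₂) + μ₂ * (1 - ε₁) * (1 + ε₂)
  have hB : A * conj (1 + ε₁) * conj (1 + ε₂)
      = (‖1 + ε₁‖ ^ 2 : ℝ) * (μ₁ * (1 - ε₂) * conj (1 + ε₂))
        + (‖1 + ε₂‖ ^ 2 : ℝ) * (μ₂ * (1 - ε₁) * conj (1 + ε₁)) := by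
    simp only [← Complex.normSq_eq_norm_sq, ← Complex.mul_conj, A]
    ring
  have hlow : ∀ ε : ℂ, ‖ε‖ ≤ ρ → (1 - ρ) ^ 2 ≤ ‖1 + ε‖ ^ 2 := fun ε hε => by
    have : 1 - ρ ≤ ‖1 + ε‖ := by
      have := norm_sub_norm_le (1 : ℂ) (-ε)
      rw [norm_one, norm_neg, sub_neg_eq_add] at this
      linarith
    exact pow_le_pow_left₀ (by linarith) this 2
  have hup : ∀ ε : ℂ, ‖ε‖ ≤ ρ → ‖1 + ε‖ ≤ 1 + ρ := fun ε hε =>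
    (norm_add_le _ _).trans (by rw [norm_one]; linarith)
  have h₁ := one_sub_mul_re_le_re_mul_one_sub_mul_conj hρ hε₂ hμ₁
  have h₂ := one_sub_mul_re_le_re_mul_one_sub_mul_conj hρ hε₁ hμ₂
  have hu₁ : 0 ≤ (1 - ρ) * μ₁.re := by linarith [abs_nonneg μ₁.im]
  have hu₂ : 0 ≤ (1 - ρ) * μ₂.re := by linarith [abs_nonneg μ₂.im]
  calc (1 - ρ) ^ 3 * (μ₁.re + μ₂.re)
      = (1 - ρ) ^ 2 * ((1 - ρ) * μ₁.re) + (1 - ρ) ^ 2 * ((1 - ρ) * μ₂.re) := by ring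
    _ ≤ (A * conj (1 + ε₁) * conj (1 + ε₂)).re := by
      rw [hB, Complex.add_re, Complex.re_ofReal_mul, Complex.re_ofReal_mul]
      exact add_le_add (mul_le_mul (hlow ε₁ hε₁) h₁ hu₁ (sq_nonneg _))
        (mul_le_mul (hlow ε₂ hε₂) h₂ hu₂ (sq_nonneg _))
    _ ≤ ‖A * conj (1 + ε₁) * conj (1 + ε₂)‖ := Complex.re_le_norm _
    _ = ‖A‖ * ‖1 + ε₁‖ * ‖1 + ε₂‖ := by simp only [norm_mul, Complex.norm_conj]
    _ ≤ ‖A‖ * (1 + ρ) * (1 + ρ) := by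
      have hρ₀ : 0 ≤ ρ := (norm_nonneg ε₁).trans hε₁
      gcongr
      exacts [hup ε₁ hε₁, hup ε₂ hε₂]
    _ = (1 + ρ) ^ 2 * ‖A‖ := by ring

theorem Complex.norm_le_two_mul_re_of_abs_im_le {z : ℂ} (h : |z.im| ≤ z.re) :
    ‖z‖ ≤ 2 * z.re :=
  (norm_le_abs_re_add_abs_im z).trans <| by
    rw [abs_of_nonneg ((abs_nonneg _).trans h)]
    linarith

/-- Fix `κ > 1`, `c0 > 0`. There are `δ0 > 0` and `C > 0`, depending only
on `κ, c0`, such that for all `k1 > 0` (with `k2 = κ k1`), all `σ̄2 ≥ c0/k1`, `M2 ≥ c0/k1`,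
and every `ξ = ξ1 + i ξ2` with `0 ≤ ξ1 ≤ (√2/2) k1` and `0 ≤ ξ2 ≤ δ0/M2`, one has
`A(ξ) ≠ 0` and `|μ₁(ξ) + μ₂(ξ)| ≤ C |A(ξ)|`. -/
theorem stmt_15 (κ c0 : ℝ) (hκ : 1 < κ) (hc0 : 0 < c0) :
    ∃ δ0 : ℝ, 0 < δ0 ∧ ∃ C : ℝ, 0 < C ∧
      ∀ k1 σ2 M2 : ℝ, 0 < k1 → c0 / k1 ≤ σ2 → c0 / k1 ≤ M2 →
      ∀ μ₁ μ₂ ε₁ ε₂ A : ℂ → ℂ,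
        (∀ ξ : ℂ, IsPrincipalSqrt ((k1 : ℂ) ^ 2 - ξ ^ 2) (μ₁ ξ)) →
        (∀ ξ : ℂ, IsPrincipalSqrt (((κ * k1 : ℝ) : ℂ) ^ 2 - ξ ^ 2) (μ₂ ξ)) →
        (∀ ξ : ℂ, ε₁ ξ =
          Complex.exp (2 * Complex.I * μ₁ ξ * ((M2 : ℂ) + Complex.I * (σ2 : ℂ)))) →
        (∀ ξ : ℂ, ε₂ ξ =
          Complex.exp (2 * Complex.I * μ₂ ξ * ((M2 : ℂ) + Complex.I * (σ2 : ℂ)))) →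
        (∀ ξ : ℂ, A ξ =
          (1 - ε₁ ξ * ε₂ ξ) * (μ₁ ξ + μ₂ ξ) + (ε₁ ξ - ε₂ ξ) * (μ₁ ξ - μ₂ ξ)) →
        ∀ ξ : ℂ, 0 ≤ ξ.re → ξ.re ≤ Real.sqrt 2 / 2 * k1 → 0 ≤ ξ.im → ξ.im ≤ δ0 / M2 →
          A ξ ≠ 0 ∧ ‖μ₁ ξ + μ₂ ξ‖ ≤ C * ‖A ξ‖ := by
  set ρ := Real.exp (-(c0 / 2))
  have hρ₀ : 0 < ρ := Real.exp_pos _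
  have hρ : ρ < 1 := Real.exp_lt_one_iff.mpr (by linarith)
  have hρ' : 0 < 1 - ρ := sub_pos.mpr hρ
  refine ⟨c0 * (1 - ρ) / 8, by positivity, 2 * (1 + ρ) ^ 2 / (1 - ρ) ^ 3, by positivity, ?_⟩
  intro k1 σ2 M2 hk1 hσ2 hM2 μ₁ μ₂ ε₁ ε₂ A hμ₁ hμ₂ hε₁ hε₂ hA ξ hre₀ hre him₀ him
  obtain ⟨hu₁, hv₁⟩ := (hμ₁ ξ).half_le_re_and_abs_im_le hk1 hre₀ hre him₀
  obtain ⟨hu₂, hv₂⟩ := (hμ₂ ξ).half_le_re_and_abs_im_le (by positivity) hre₀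
    (hre.trans (by gcongr; nlinarith)) him₀
  replace hu₂ : k1 / 2 ≤ (μ₂ ξ).re := by nlinarith
  obtain ⟨hμ₁', hε₁'⟩ :=
    abs_im_le_and_norm_exp_le hc0 hk1 hσ2 hM2 hρ'.le (by linarith) him hu₁ hv₁
  obtain ⟨hμ₂', hε₂'⟩ :=
    abs_im_le_and_norm_exp_le hc0 hk1 hσ2 hM2 hρ'.le (by linarith) him hu₂ hv₂
  have hlow := one_sub_pow_three_mul_re_add_le_norm hρ ((hε₁ ξ).symm ▸ hε₁')
    ((hε₂ ξ).symm ▸ hε₂') hμ₁' hμ₂'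
  rw [show μ₁ ξ * (1 + ε₁ ξ) * (1 - ε₂ ξ) + μ₂ ξ * (1 - ε₁ ξ) * (1 + ε₂ ξ) = A ξ by
    rw [hA]; ring] at hlow
  have hsum : ‖μ₁ ξ + μ₂ ξ‖ ≤ 2 * ((μ₁ ξ).re + (μ₂ ξ).re) := by
    refine Complex.norm_le_two_mul_re_of_abs_im_le ((abs_add_le _ _).trans ?_)
    simp only [Complex.add_re]
    nlinarith
  constructor
  · intro hA0
    rw [hA0, norm_zero, mul_zero] at hlow
    nlinarith [pow_pos hρ' 3]
  · calc ‖μ₁ ξ + μ₂ ξ‖ ≤ 2 * ((μ₁ ξ).re + (μ₂ ξ).re) := hsum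
      _ ≤ 2 * ((1 + ρ) ^ 2 * ‖A ξ‖ / (1 - ρ) ^ 3) := by
        gcongr; rwa [le_div_iff₀' (by positivity)]
      _ = 2 * (1 + ρ) ^ 2 / (1 - ρ) ^ 3 * ‖A ξ‖ := by ring
end
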